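/- Let (Δ, μ) be a probability space, (F_s)_{s≥0} a measurable semiflow on Δ with each F_s measure-preserving and (s,x) ↦ F_s x jointly measurable, and let w, h : Δ → ℝ^N be bounded measurable and χ ∈ L^∞(μ; ℝ^N) satisfy w = h + χ − χ∘F_1 everywhere. Define W'_n(x)(t) = n^{−1/2} ∫_0^{nt} w(F_s x) ds and W''_n(x)(t) = n^{−1/2} ∫_0^{nt} h(F_s x) ds, viewed as maps Δ → C([0,1], ℝ^N). Then sup_{t∈[0,1]} |W'_n(x)(t) − W''_n(x)(t)| ≤ 2 n^{−1/2} ‖χ‖_∞ for every x ∈ Δ and n ≥ 1. Consequently, both the 1-Wasserstein distance and the Lévy–Prokhorov distance between the laws of W'_n and W''_n are at most 2 n^{−1/2} ‖χ‖_∞. -/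

import Mathlib

open MeasureTheory
open scoped ENNReal NNReal

/-- The process `W_n(x)(t) = n^{-1/2} ∫_0^{nt} w(F_s x) ds` associated with a semiflow
`(F_s)` and an observable `w`. -/
noncomputable def flowPath {Δ E : Type*} [NormedAddCommGroup E] [NormedSpace ℝ E]
    (φ : ℝ → Δ → Δ) (w : Δ → E) (n : ℕ) (x : Δ) : ℝ → E :=
  fun t => ((n : ℝ) ^ (-(1 / 2 : ℝ))) • ∫ s in (0 : ℝ)..((n : ℝ) * t), w (φ s x)

/-- The uniform (extended) distance between two paths over the time interval `[0,1]`. -/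
noncomputable def supEDist01 {E : Type*} [PseudoEMetricSpace E] (g h : ℝ → E) : ℝ≥0∞ :=
  ⨆ t : Set.Icc (0 : ℝ) 1, edist (g t) (h t)

/-- The Lévy–Prokhorov distance `Π(μ,ν) = inf {ε > 0 : μ(B) ≤ ν(B^ε) + ε for all Borel B}`,
with respect to a given (extended) distance `d`. -/
noncomputable def prokhorovDist {S : Type*} [MeasurableSpace S] (d : S → S → ℝ≥0∞)
    (μ ν : Measure S) : ℝ :=
  sInf {ε : ℝ | 0 < ε ∧ ∀ B : Set S, MeasurableSet B →
    μ B ≤ ν {y | ∃ x ∈ B, d x y < ENNReal.ofReal ε} + ENNReal.ofReal ε}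

section Aux

variable {Δ : Type*} [MeasurableSpace Δ] {N : ℕ}

private lemma supEDist01_def {E : Type*} [PseudoEMetricSpace E] (g h : ℝ → E) :
    supEDist01 g h = ⨆ t : Set.Icc (0 : ℝ) 1, edist (g t) (h t) := rfl

private lemma aux_meas_comp (φ : ℝ → Δ → Δ)
    (hφ : Measurable fun q : ℝ × Δ => φ q.1 q.2)
    (f : Δ → EuclideanSpace ℝ (Fin N)) (hf : Measurable f) (x : Δ) :
    Measurable fun s : ℝ => f (φ s x) :=
  hf.comp (hφ.comp (measurable_id.prodMk measurable_const))

private lemma aux_ii (g : ℝ → EuclideanSpace ℝ (Fin N)) (hg : Measurable g) (C : ℝ)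
    (hb : ∀ s, ‖g s‖ ≤ C) (a b : ℝ) : IntervalIntegrable g volume a b := by
  rw [intervalIntegrable_iff]
  have hconst : IntegrableOn (fun _ : ℝ => C) (Set.uIoc a b) volume := by
    refine (integrableOn_const_iff (C := C)).mpr (Or.inr ?_)
    rw [Set.uIoc, Real.volume_Ioc]
    exact ENNReal.ofReal_lt_top
  exact hconst.mono' hg.aestronglyMeasurable.restrict (Filter.Eventually.of_forall fun s => hb s)

private lemma aux_param_meas (φ : ℝ → Δ → Δ)
    (hφ : Measurable fun q : ℝ × Δ => φ q.1 q.2)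
    (f : Δ → EuclideanSpace ℝ (Fin N)) (hf : Measurable f) (u : ℝ) :
    Measurable fun x : Δ => ∫ s in (0 : ℝ)..u, f (φ s x) := by
  have hsm : StronglyMeasurable (Function.uncurry fun (x : Δ) (s : ℝ) => f (φ s x)) := by
    apply Measurable.stronglyMeasurable
    exact hf.comp (hφ.comp (measurable_snd.prodMk measurable_fst))
  have h1 : Measurable fun x : Δ => ∫ s in Set.uIoc (0 : ℝ) u, f (φ s x) :=
    (hsm.integral_prod_right (ν := volume.restrict (Set.uIoc (0 : ℝ) u))).measurable
  simp only [intervalIntegral.intervalIntegral_eq_integral_uIoc]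
  exact h1.const_smul (if (0 : ℝ) ≤ u then (1 : ℝ) else -1)

private lemma aux_coord_meas (φ : ℝ → Δ → Δ)
    (hφ : Measurable fun q : ℝ × Δ => φ q.1 q.2)
    (f : Δ → EuclideanSpace ℝ (Fin N)) (hf : Measurable f) (n : ℕ) (t : ℝ) :
    Measurable fun x : Δ => flowPath φ f n x t := by
  unfold flowPath
  exact (aux_param_meas φ hφ f hf ((n : ℝ) * t)).const_smul ((n : ℝ) ^ (-(1 / 2 : ℝ)))

private lemma aux_flowPath_meas (φ : ℝ → Δ → Δ)
    (hφ : Measurable fun q : ℝ × Δ => φ q.1 q.2)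
    (f : Δ → EuclideanSpace ℝ (Fin N)) (hf : Measurable f) (n : ℕ) :
    Measurable fun x : Δ => flowPath φ f n x :=
  measurable_pi_lambda _ fun t => aux_coord_meas φ hφ f hf n t

private lemma aux_flowPath_zero (φ : ℝ → Δ → Δ) (f : Δ → EuclideanSpace ℝ (Fin N))
    (n : ℕ) (x : Δ) : flowPath φ f n x 0 = 0 := by
  unfold flowPath
  simp

private lemma aux_lip (φ : ℝ → Δ → Δ)
    (hφ : Measurable fun q : ℝ × Δ => φ q.1 q.2)
    (f : Δ → EuclideanSpace ℝ (Fin N)) (hf : Measurable f)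
    (Cf : ℝ) (hfb : ∀ x, ‖f x‖ ≤ Cf) (n : ℕ) (x : Δ) (t t' : ℝ) :
    ‖flowPath φ f n x t - flowPath φ f n x t'‖
      ≤ ((n : ℝ) ^ (-(1 / 2 : ℝ)) * n * Cf) * |t - t'| := by
  have hc : (0 : ℝ) ≤ (n : ℝ) ^ (-(1 / 2 : ℝ)) := Real.rpow_nonneg (Nat.cast_nonneg n) _
  have hii := aux_ii _ (aux_meas_comp φ hφ f hf x) Cf (fun s => hfb _)
  unfold flowPath
  rw [← smul_sub, intervalIntegral.integral_interval_sub_left (hii 0 _) (hii 0 _), norm_smul,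
    Real.norm_eq_abs, abs_of_nonneg hc]
  have h1 : ‖∫ s in ((n : ℝ) * t')..((n : ℝ) * t), f (φ s x)‖ ≤ Cf * |(n : ℝ) * t - (n : ℝ) * t'| :=
    intervalIntegral.norm_integral_le_of_norm_le_const fun s _ => hfb _
  have habs : |(n : ℝ) * t - (n : ℝ) * t'| = (n : ℝ) * |t - t'| := by
    rw [← mul_sub, abs_mul, Nat.abs_cast]
  rw [habs] at h1
  calc (n : ℝ) ^ (-(1 / 2 : ℝ)) * ‖∫ s in ((n : ℝ) * t')..((n : ℝ) * t), f (φ s x)‖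
      ≤ (n : ℝ) ^ (-(1 / 2 : ℝ)) * (Cf * ((n : ℝ) * |t - t'|)) :=
        mul_le_mul_of_nonneg_left h1 hc
    _ = ((n : ℝ) ^ (-(1 / 2 : ℝ)) * n * Cf) * |t - t'| := by ring

private lemma aux_norm_le (φ : ℝ → Δ → Δ)
    (hφ : Measurable fun q : ℝ × Δ => φ q.1 q.2)
    (f : Δ → EuclideanSpace ℝ (Fin N)) (hf : Measurable f)
    (Cf : ℝ) (hCf : 0 ≤ Cf) (hfb : ∀ x, ‖f x‖ ≤ Cf) (n : ℕ) (x : Δ)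
    (t : ℝ) (ht : t ∈ Set.Icc (0 : ℝ) 1) :
    ‖flowPath φ f n x t‖ ≤ (n : ℝ) ^ (-(1 / 2 : ℝ)) * n * Cf := by
  have hL : 0 ≤ (n : ℝ) ^ (-(1 / 2 : ℝ)) * n * Cf :=
    mul_nonneg (mul_nonneg (Real.rpow_nonneg (Nat.cast_nonneg n) _) (Nat.cast_nonneg n)) hCf
  have h1 := aux_lip φ hφ f hf Cf hfb n x t 0
  rw [aux_flowPath_zero, sub_zero, sub_zero] at h1
  refine h1.trans ?_
  have : |t| ≤ 1 := abs_le.mpr ⟨by linarith [ht.1], ht.2⟩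
  nlinarith

private lemma aux_grid_est (m : ℕ) (t : ℝ) (ht : t ∈ Set.Icc (0 : ℝ) 1) :
    |((min ⌊((m : ℝ) + 1) * t⌋₊ (m + 1) : ℕ) : ℝ) / ((m : ℝ) + 1) - t| ≤ 1 / ((m : ℝ) + 1) := by
  have hm : (0 : ℝ) < (m : ℝ) + 1 := by positivity
  have h0 : 0 ≤ ((m : ℝ) + 1) * t := mul_nonneg hm.le ht.1
  have hfle : ⌊((m : ℝ) + 1) * t⌋₊ ≤ m + 1 := by
    have : ((m : ℝ) + 1) * t ≤ ((m + 1 : ℕ) : ℝ) := by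
      push_cast
      nlinarith [ht.2, ht.1]
    calc ⌊((m : ℝ) + 1) * t⌋₊ ≤ ⌊((m + 1 : ℕ) : ℝ)⌋₊ := Nat.floor_mono this
      _ = m + 1 := Nat.floor_natCast _
  rw [min_eq_left hfle]
  set j : ℕ := ⌊((m : ℝ) + 1) * t⌋₊ with hj
  have h1 : (j : ℝ) ≤ ((m : ℝ) + 1) * t := Nat.floor_le h0
  have h2 : ((m : ℝ) + 1) * t < (j : ℝ) + 1 := Nat.lt_floor_add_one _
  have e : (j : ℝ) / ((m : ℝ) + 1) - t = ((j : ℝ) - ((m : ℝ) + 1) * t) / ((m : ℝ) + 1) := by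
    field_simp
  rw [e, abs_div, abs_of_pos hm]
  gcongr
  rw [abs_le]
  constructor <;> linarith

private noncomputable def stepIdx (k : ℕ) (t : ℝ) : Fin (k + 2) :=
  ⟨min ⌊((k : ℝ) + 1) * t⌋₊ (k + 1), Nat.lt_succ_of_le (min_le_right _ _)⟩

private noncomputable def stepF {N : ℕ} (F : (ℝ → EuclideanSpace ℝ (Fin N)) → ℝ) (k : ℕ)
    (v : Fin (k + 2) → EuclideanSpace ℝ (Fin N)) : ℝ :=
  F (fun t => v (stepIdx k t))

private lemma stepF_lip {N : ℕ} (F : (ℝ → EuclideanSpace ℝ (Fin N)) → ℝ)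
    (hF : ∀ g₁ g₂, ENNReal.ofReal |F g₁ - F g₂| ≤ supEDist01 g₁ g₂) (k : ℕ) :
    LipschitzWith 1 (stepF F k) := by
  refine LipschitzWith.of_edist_le fun v v' => ?_
  rw [edist_dist, Real.dist_eq]
  refine le_trans (hF (fun t => v (stepIdx k t)) (fun t => v' (stepIdx k t))) ?_
  rw [supEDist01_def]
  exact iSup_le fun t => edist_le_pi_edist _ _ (stepIdx k (t : ℝ))

private lemma aux_F_meas (φ : ℝ → Δ → Δ)
    (hφ : Measurable fun q : ℝ × Δ => φ q.1 q.2)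
    (f : Δ → EuclideanSpace ℝ (Fin N)) (hf : Measurable f)
    (Cf : ℝ) (hCf : 0 ≤ Cf) (hfb : ∀ x, ‖f x‖ ≤ Cf) (n : ℕ)
    (F : (ℝ → EuclideanSpace ℝ (Fin N)) → ℝ)
    (hF : ∀ g₁ g₂, ENNReal.ofReal |F g₁ - F g₂| ≤ supEDist01 g₁ g₂) :
    Measurable fun x : Δ => F (flowPath φ f n x) := by
  set L : ℝ := (n : ℝ) ^ (-(1 / 2 : ℝ)) * n * Cf with hLdef
  have hL0 : 0 ≤ L :=
    mul_nonneg (mul_nonneg (Real.rpow_nonneg (Nat.cast_nonneg n) _) (Nat.cast_nonneg n)) hCf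
  have hgrid : ∀ k : ℕ, Measurable fun (x : Δ) (j : Fin (k + 2)) =>
      flowPath φ f n x ((j : ℝ) / ((k : ℝ) + 1)) :=
    fun k => measurable_pi_lambda _ fun j => aux_coord_meas φ hφ f hf n _
  have hGmeas : ∀ k : ℕ, Measurable fun x =>
      stepF F k (fun j => flowPath φ f n x ((j : ℝ) / ((k : ℝ) + 1))) :=
    fun k => ((stepF_lip F hF k).continuous.measurable).comp (hgrid k)
  have hconv : ∀ x, Filter.Tendsto
      (fun k => stepF F k (fun j => flowPath φ f n x ((j : ℝ) / ((k : ℝ) + 1))))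
      Filter.atTop (nhds (F (flowPath φ f n x))) := by
    intro x
    rw [tendsto_iff_dist_tendsto_zero]
    have hbound : ∀ k : ℕ,
        dist (stepF F k (fun j => flowPath φ f n x ((j : ℝ) / ((k : ℝ) + 1))))
          (F (flowPath φ f n x)) ≤ L * (1 / ((k : ℝ) + 1)) := by
      intro k
      have hsup : supEDist01 (fun t => flowPath φ f n x (((stepIdx k t : ℕ) : ℝ) / ((k : ℝ) + 1)))
          (flowPath φ f n x) ≤ ENNReal.ofReal (L * (1 / ((k : ℝ) + 1))) := by
        rw [supEDist01_def]
        refine iSup_le fun t => ?_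
        rw [edist_dist]
        refine ENNReal.ofReal_le_ofReal ?_
        rw [dist_eq_norm]
        refine (aux_lip φ hφ f hf Cf hfb n x (((stepIdx k (t : ℝ) : ℕ) : ℝ) / ((k : ℝ) + 1))
          (t : ℝ)).trans ?_
        have h2 : |(((stepIdx k (t : ℝ)) : ℕ) : ℝ) / ((k : ℝ) + 1) - (t : ℝ)| ≤ 1 / ((k : ℝ) + 1) :=
          aux_grid_est k (t : ℝ) t.2
        exact mul_le_mul_of_nonneg_left h2 hL0
      have hle := le_trans
        (hF (fun t => flowPath φ f n x (((stepIdx k t : ℕ) : ℝ) / ((k : ℝ) + 1)))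
          (flowPath φ f n x)) hsup
      rw [Real.dist_eq]
      have hLk : 0 ≤ L * (1 / ((k : ℝ) + 1)) := by positivity
      exact (ENNReal.ofReal_le_ofReal_iff hLk).mp hle
    refine squeeze_zero (fun k => dist_nonneg) hbound ?_
    have h3 := tendsto_one_div_add_atTop_nhds_zero_nat.const_mul L
    simpa using h3
  exact measurable_of_tendsto_metrizable hGmeas (tendsto_pi_nhds.mpr hconv)

private lemma aux_unif_close (φ : ℝ → Δ → Δ)
    (hφadd : ∀ s t : ℝ, 0 ≤ s → 0 ≤ t → φ (s + t) = φ s ∘ φ t)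
    (hφ : Measurable fun q : ℝ × Δ => φ q.1 q.2)
    (w h : Δ → EuclideanSpace ℝ (Fin N)) (hw : Measurable w) (hh : Measurable h)
    (Cw : ℝ) (hwb : ∀ x, ‖w x‖ ≤ Cw) (Ch : ℝ) (hhb : ∀ x, ‖h x‖ ≤ Ch)
    (χ : Δ → EuclideanSpace ℝ (Fin N)) (hχ : Measurable χ)
    (Cχ : ℝ) (hχb : ∀ x, ‖χ x‖ ≤ Cχ)
    (hdec : ∀ x, w x = h x + χ x - χ (φ 1 x))
    (n : ℕ) (x : Δ) (t : ℝ) (ht : t ∈ Set.Icc (0 : ℝ) 1) :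
    ‖flowPath φ w n x t - flowPath φ h n x t‖ ≤ 2 * (n : ℝ) ^ (-(1 / 2 : ℝ)) * Cχ := by
  have hc : (0 : ℝ) ≤ (n : ℝ) ^ (-(1 / 2 : ℝ)) := Real.rpow_nonneg (Nat.cast_nonneg n) _
  set a : ℝ := (n : ℝ) * t with ha
  have ha0 : 0 ≤ a := mul_nonneg (Nat.cast_nonneg n) ht.1
  have iiw := aux_ii _ (aux_meas_comp φ hφ w hw x) Cw (fun s => hwb _)
  have iih := aux_ii _ (aux_meas_comp φ hφ h hh x) Ch (fun s => hhb _)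
  have hχs : Measurable fun s : ℝ => χ (φ s x) := aux_meas_comp φ hφ χ hχ x
  have iiχ := aux_ii _ hχs Cχ (fun s => hχb _)
  have hχ1m : Measurable fun s : ℝ => χ (φ (s + 1) x) := hχs.comp (measurable_add_const 1)
  have iiχ1 := aux_ii _ hχ1m Cχ (fun s => hχb _)
  have key : (∫ s in (0 : ℝ)..a, w (φ s x)) - ∫ s in (0 : ℝ)..a, h (φ s x)
      = (∫ s in (0 : ℝ)..(1 : ℝ), χ (φ s x)) - ∫ s in a..(a + 1), χ (φ s x) := by
    have e1 : (∫ s in (0 : ℝ)..a, w (φ s x)) - ∫ s in (0 : ℝ)..a, h (φ s x)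
        = ∫ s in (0 : ℝ)..a, (χ (φ s x) - χ (φ (s + 1) x)) := by
      rw [← intervalIntegral.integral_sub (iiw 0 a) (iih 0 a)]
      apply intervalIntegral.integral_congr
      intro s hs
      have hs0 : 0 ≤ s := by
        rw [Set.uIcc_of_le ha0] at hs
        exact hs.1
      have hcomp : φ 1 (φ s x) = φ (s + 1) x := by
        rw [add_comm s 1, hφadd 1 s zero_le_one hs0]
        rfl
      simp only
      rw [hdec (φ s x), hcomp]
      abel
    have e2 : (∫ s in (0 : ℝ)..a, (χ (φ s x) - χ (φ (s + 1) x)))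
        = (∫ s in (0 : ℝ)..a, χ (φ s x)) - ∫ s in (0 : ℝ)..a, χ (φ (s + 1) x) :=
      intervalIntegral.integral_sub (iiχ 0 a) (iiχ1 0 a)
    have e3 : (∫ s in (0 : ℝ)..a, χ (φ (s + 1) x)) = ∫ s in (1 : ℝ)..(a + 1), χ (φ s x) := by
      rw [intervalIntegral.integral_comp_add_right (fun s => χ (φ s x)) 1, zero_add]
    have e4 : (∫ s in (0 : ℝ)..(1 : ℝ), χ (φ s x)) + ∫ s in (1 : ℝ)..a, χ (φ s x)
        = ∫ s in (0 : ℝ)..a, χ (φ s x) :=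
      intervalIntegral.integral_add_adjacent_intervals (iiχ 0 1) (iiχ 1 a)
    have e5 : (∫ s in (1 : ℝ)..a, χ (φ s x)) + ∫ s in a..(a + 1), χ (φ s x)
        = ∫ s in (1 : ℝ)..(a + 1), χ (φ s x) :=
      intervalIntegral.integral_add_adjacent_intervals (iiχ 1 a) (iiχ a (a + 1))
    rw [e1, e2, e3, ← e4, ← e5]
    abel
  have hb1 : ‖∫ s in (0 : ℝ)..(1 : ℝ), χ (φ s x)‖ ≤ Cχ := by
    have := intervalIntegral.norm_integral_le_of_norm_le_const
      (a := (0 : ℝ)) (b := 1) (C := Cχ) (f := fun s => χ (φ s x)) (fun s _ => hχb _)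
    simpa using this
  have hb2 : ‖∫ s in a..(a + 1), χ (φ s x)‖ ≤ Cχ := by
    have := intervalIntegral.norm_integral_le_of_norm_le_const
      (a := a) (b := a + 1) (C := Cχ) (f := fun s => χ (φ s x)) (fun s _ => hχb _)
    simpa using this
  have hD : ‖(∫ s in (0 : ℝ)..a, w (φ s x)) - ∫ s in (0 : ℝ)..a, h (φ s x)‖ ≤ Cχ + Cχ := by
    rw [key]
    exact le_trans (norm_sub_le _ _) (add_le_add hb1 hb2)
  show ‖((n : ℝ) ^ (-(1 / 2 : ℝ))) • (∫ s in (0 : ℝ)..a, w (φ s x))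
      - ((n : ℝ) ^ (-(1 / 2 : ℝ))) • (∫ s in (0 : ℝ)..a, h (φ s x))‖ ≤ _
  rw [← smul_sub, norm_smul, Real.norm_eq_abs, abs_of_nonneg hc]
  calc (n : ℝ) ^ (-(1 / 2 : ℝ)) * ‖(∫ s in (0 : ℝ)..a, w (φ s x)) - ∫ s in (0 : ℝ)..a, h (φ s x)‖
      ≤ (n : ℝ) ^ (-(1 / 2 : ℝ)) * (Cχ + Cχ) := mul_le_mul_of_nonneg_left hD hc
    _ = 2 * (n : ℝ) ^ (-(1 / 2 : ℝ)) * Cχ := by ring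

end Aux


/-- If `w = h + χ − χ∘F₁` with `χ ∈ L^∞`, then the integral processes
`W'_n` (driven by `w`) and `W''_n` (driven by `h`) are uniformly within `2 n^{-1/2} ‖χ‖_∞`
of each other; consequently both the 1-Wasserstein and the Lévy–Prokhorov distances between
their laws are at most `2 n^{-1/2} ‖χ‖_∞`. -/
theorem flowPath_coboundary_close
    {Δ : Type*} [MeasurableSpace Δ] (μ : Measure Δ) [IsProbabilityMeasure μ]
    (φ : ℝ → Δ → Δ)
    (hφ0 : φ 0 = id)
    (hφadd : ∀ s t : ℝ, 0 ≤ s → 0 ≤ t → φ (s + t) = φ s ∘ φ t)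
    (hφmp : ∀ s : ℝ, 0 ≤ s → MeasurePreserving (φ s) μ μ)
    (hφmeas : Measurable fun q : ℝ × Δ => φ q.1 q.2)
    {N : ℕ} (w h : Δ → EuclideanSpace ℝ (Fin N))
    (hw : Measurable w) (hh : Measurable h)
    (Cw : ℝ) (hwb : ∀ x, ‖w x‖ ≤ Cw) (Ch : ℝ) (hhb : ∀ x, ‖h x‖ ≤ Ch)
    (χ : Δ → EuclideanSpace ℝ (Fin N)) (hχ : Measurable χ)
    (Cχ : ℝ) (hχb : ∀ x, ‖χ x‖ ≤ Cχ)
    (hdec : ∀ x, w x = h x + χ x - χ (φ 1 x)) :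
    (∀ (n : ℕ), 1 ≤ n → ∀ x, ∀ t ∈ Set.Icc (0 : ℝ) 1,
      ‖flowPath φ w n x t - flowPath φ h n x t‖ ≤ 2 * (n : ℝ) ^ (-(1 / 2 : ℝ)) * Cχ) ∧
    (∀ (n : ℕ), 1 ≤ n → ∀ F : (ℝ → EuclideanSpace ℝ (Fin N)) → ℝ,
      (∀ g₁ g₂, ENNReal.ofReal |F g₁ - F g₂| ≤ supEDist01 g₁ g₂) →
      |(∫ x, F (flowPath φ w n x) ∂μ) - ∫ x, F (flowPath φ h n x) ∂μ|
        ≤ 2 * (n : ℝ) ^ (-(1 / 2 : ℝ)) * Cχ) ∧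
    (∀ (n : ℕ), 1 ≤ n →
      prokhorovDist supEDist01 (μ.map fun x => flowPath φ w n x)
          (μ.map fun x => flowPath φ h n x)
        ≤ 2 * (n : ℝ) ^ (-(1 / 2 : ℝ)) * Cχ) := by
  have hΔ : Nonempty Δ := by
    by_contra hcon
    have h1 : μ Set.univ = 1 := measure_univ
    rw [Set.univ_eq_empty_iff.mpr (not_nonempty_iff.mp hcon), measure_empty] at h1
    exact zero_ne_one h1
  obtain ⟨x₀⟩ := hΔ
  have hCχ0 : 0 ≤ Cχ := le_trans (norm_nonneg _) (hχb x₀)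
  have hCw0 : 0 ≤ Cw := le_trans (norm_nonneg _) (hwb x₀)
  have hCh0 : 0 ≤ Ch := le_trans (norm_nonneg _) (hhb x₀)
  have hB0 : ∀ n : ℕ, 0 ≤ 2 * (n : ℝ) ^ (-(1 / 2 : ℝ)) * Cχ := fun n =>
    mul_nonneg (mul_nonneg (by norm_num) (Real.rpow_nonneg (Nat.cast_nonneg n) _)) hCχ0
  have p1 : ∀ n : ℕ, ∀ x, ∀ t ∈ Set.Icc (0 : ℝ) 1,
      ‖flowPath φ w n x t - flowPath φ h n x t‖ ≤ 2 * (n : ℝ) ^ (-(1 / 2 : ℝ)) * Cχ :=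
    fun n x t ht => aux_unif_close φ hφadd hφmeas w h hw hh Cw hwb Ch hhb χ hχ Cχ hχb hdec n x t ht
  have hsup : ∀ n : ℕ, ∀ x, supEDist01 (flowPath φ w n x) (flowPath φ h n x)
      ≤ ENNReal.ofReal (2 * (n : ℝ) ^ (-(1 / 2 : ℝ)) * Cχ) := by
    intro n x
    rw [supEDist01_def]
    refine iSup_le fun t => ?_
    rw [edist_dist]
    exact ENNReal.ofReal_le_ofReal (by rw [dist_eq_norm]; exact p1 n x t t.2)
  refine ⟨fun n _ x t ht => p1 n x t ht, ?_, ?_⟩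
  · -- Wasserstein-type bound
    intro n hn F hF
    have hptw : ∀ x, |F (flowPath φ w n x) - F (flowPath φ h n x)|
        ≤ 2 * (n : ℝ) ^ (-(1 / 2 : ℝ)) * Cχ := fun x =>
      (ENNReal.ofReal_le_ofReal_iff (hB0 n)).mp (le_trans (hF _ _) (hsup n x))
    have hbnd : ∀ (f : Δ → EuclideanSpace ℝ (Fin N)), Measurable f → ∀ Cf : ℝ, 0 ≤ Cf →
        (∀ x, ‖f x‖ ≤ Cf) → Integrable (fun x => F (flowPath φ f n x)) μ := by
      intro f hf Cf hCf hfb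
      have hFm := aux_F_meas φ hφmeas f hf Cf hCf hfb n F hF
      have hL0 : 0 ≤ (n : ℝ) ^ (-(1 / 2 : ℝ)) * n * Cf :=
        mul_nonneg (mul_nonneg (Real.rpow_nonneg (Nat.cast_nonneg n) _) (Nat.cast_nonneg n)) hCf
      refine Integrable.mono'
        (integrable_const (|F (fun _ => (0 : EuclideanSpace ℝ (Fin N)))|
          + (n : ℝ) ^ (-(1 / 2 : ℝ)) * n * Cf))
        hFm.aestronglyMeasurable (Filter.Eventually.of_forall fun x => ?_)
      have hd : |F (flowPath φ f n x) - F (fun _ => (0 : EuclideanSpace ℝ (Fin N)))|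
          ≤ (n : ℝ) ^ (-(1 / 2 : ℝ)) * n * Cf := by
        refine (ENNReal.ofReal_le_ofReal_iff hL0).mp (le_trans (hF _ _) ?_)
        rw [supEDist01_def]
        refine iSup_le fun t => ?_
        rw [edist_dist]
        refine ENNReal.ofReal_le_ofReal ?_
        rw [dist_eq_norm, sub_zero]
        exact aux_norm_le φ hφmeas f hf Cf hCf hfb n x (t : ℝ) t.2
      rw [Real.norm_eq_abs]
      have h5 := abs_sub_abs_le_abs_sub (F (flowPath φ f n x))
        (F (fun _ => (0 : EuclideanSpace ℝ (Fin N))))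
      linarith
    have hiw := hbnd w hw Cw hCw0 hwb
    have hih := hbnd h hh Ch hCh0 hhb
    rw [← integral_sub hiw hih]
    have h6 := norm_integral_le_of_norm_le_const (μ := μ)
      (f := fun x => F (flowPath φ w n x) - F (flowPath φ h n x))
      (C := 2 * (n : ℝ) ^ (-(1 / 2 : ℝ)) * Cχ)
      (Filter.Eventually.of_forall fun x => by rw [Real.norm_eq_abs]; exact hptw x)
    simpa [Real.norm_eq_abs, measure_univ] using h6
  · -- Prokhorov bound
    intro n hn
    have hmw : Measurable fun x => flowPath φ w n x := aux_flowPath_meas φ hφmeas w hw n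
    have hmh : Measurable fun x => flowPath φ h n x := aux_flowPath_meas φ hφmeas h hh n
    unfold prokhorovDist
    set S : Set ℝ := {ε : ℝ | 0 < ε ∧ ∀ B : Set (ℝ → EuclideanSpace ℝ (Fin N)), MeasurableSet B →
      (μ.map fun x => flowPath φ w n x) B
        ≤ (μ.map fun x => flowPath φ h n x) {y | ∃ g ∈ B, supEDist01 g y < ENNReal.ofReal ε}
          + ENNReal.ofReal ε} with hS
    have hsubset : Set.Ioi (2 * (n : ℝ) ^ (-(1 / 2 : ℝ)) * Cχ) ⊆ S := by
      intro ε hε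
      have hε0 : 0 < ε := lt_of_le_of_lt (hB0 n) hε
      refine ⟨hε0, fun Bs hBs => ?_⟩
      rw [Measure.map_apply hmw hBs]
      have hss : (fun x => flowPath φ w n x) ⁻¹' Bs
          ⊆ (fun x => flowPath φ h n x) ⁻¹'
            {y | ∃ g ∈ Bs, supEDist01 g y < ENNReal.ofReal ε} := fun x hx =>
        ⟨flowPath φ w n x, hx,
          lt_of_le_of_lt (hsup n x) ((ENNReal.ofReal_lt_ofReal_iff hε0).mpr hε)⟩
      calc μ ((fun x => flowPath φ w n x) ⁻¹' Bs)
          ≤ μ ((fun x => flowPath φ h n x) ⁻¹'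
              {y | ∃ g ∈ Bs, supEDist01 g y < ENNReal.ofReal ε}) := measure_mono hss
        _ ≤ (μ.map fun x => flowPath φ h n x)
              {y | ∃ g ∈ Bs, supEDist01 g y < ENNReal.ofReal ε} :=
            Measure.le_map_apply hmh.aemeasurable _
        _ ≤ _ := le_self_add
    have hbdd : BddBelow S := ⟨0, fun ε hε => le_of_lt hε.1⟩
    have h1 : sInf S ≤ sInf (Set.Ioi (2 * (n : ℝ) ^ (-(1 / 2 : ℝ)) * Cχ)) :=
      csInf_le_csInf hbdd Set.nonempty_Ioi hsubset
    rwa [csInf_Ioi] at h1
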